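/- arXiv:1506.00976 — 5 statements merged into one kernel-verified Lean document; each statement's English description precedes it below -/
import Mathlib

section
/- Let X be a real-valued random variable on a probability space whose cumulative distribution function G_X (defined by G_X(x) = P(X ≤ x)) is continuous. Then the random variable G_X(X) is uniformly distributed on the interval [0,1], i.e. the pushforward of the law of X under G_X is the uniform (Lebesgue) probability measure on [0,1]. -/
open MeasureTheory Set Filter Topology ProbabilityTheory

/-!
`G` is the cdf of the law `ν` of `X`, so it suffices to show `ν (G ⁻¹' Iic t) = min t 1` for `t ≥ 0`.
The set `G ⁻¹' Iic t` is a closed lower set of `ℝ`, hence `∅`, `ℝ` or some `Iic a`. In the last case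
continuity forces `G a = t`, so its measure is `G a = t`; in the first two the limits of `G` at `∓∞`
force `t = 0`, resp. `t ≥ 1`.
-/

theorem IsLowerSet.eq_empty_or_eq_univ_or_eq_Iic_of_isClosed {α : Type*}
    [ConditionallyCompleteLinearOrder α] [TopologicalSpace α] [OrderTopology α]
    {s : Set α} (hs : IsLowerSet s) (hc : IsClosed s) :
    s = ∅ ∨ s = univ ∨ ∃ a, s = Iic a := by
  rcases s.eq_empty_or_nonempty with h | hne
  · exact Or.inl h
  by_cases hbdd : BddAbove s
  · exact Or.inr <| Or.inr ⟨sSup s, Subset.antisymm (fun _ hx ↦ le_csSup hbdd hx)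
      fun _ hx ↦ hs hx (hc.csSup_mem hne hbdd)⟩
  · refine Or.inr <| Or.inl <| eq_univ_of_forall fun x ↦ ?_
    obtain ⟨y, hy, hxy⟩ := not_bddAbove_iff.mp hbdd x
    exact hs hxy.le hy

theorem Continuous.apply_eq_of_preimage_Iic_eq_Iic {α β : Type*}
    [LinearOrder α] [TopologicalSpace α] [OrderTopology α] [DenselyOrdered α] [NoMaxOrder α]
    [LinearOrder β] [TopologicalSpace β] [ClosedIciTopology β]
    {f : α → β} (hf : Continuous f) {a : α} {t : β} (h : f ⁻¹' Iic t = Iic a) : f a = t := by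
  have h_le : f a ≤ t := (h ▸ self_mem_Iic : a ∈ f ⁻¹' Iic t)
  have h_Ioi : Ioi a ⊆ f ⁻¹' Ici t := fun x hx ↦
    le_of_lt <| not_le.mp fun hxt ↦ (not_le.mpr hx) (h ▸ hxt : x ∈ Iic a)
  have h_ge : t ≤ f a :=
    (isClosed_Ici.preimage hf).closure_subset_iff.mpr h_Ioi (closure_Ioi a ▸ self_mem_Ici)
  exact le_antisymm h_le h_ge

theorem Real.volume_restrict_Icc_zero_one_Iic (t : ℝ) :
    volume.restrict (Icc (0 : ℝ) 1) (Iic t) = ENNReal.ofReal (min t 1) := by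
  have h_inter : Iic t ∩ Icc (0 : ℝ) 1 = Icc 0 (min t 1) := by
    ext x
    simp only [mem_inter_iff, mem_Iic, mem_Icc, le_min_iff]
    tauto
  rw [Measure.restrict_apply measurableSet_Iic, h_inter, Real.volume_Icc, sub_zero]

namespace ProbabilityTheory

variable (ν : Measure ℝ) [IsProbabilityMeasure ν]

theorem measure_cdf_preimage_Iic (hc : Continuous (cdf ν)) (t : ℝ) :
    ν (cdf ν ⁻¹' Iic t) = ENNReal.ofReal (min t 1) := by
  have h_lower : IsLowerSet (cdf ν ⁻¹' Iic t) := fun _ _ hyx hx ↦ (monotone_cdf ν hyx).trans hx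
  rcases h_lower.eq_empty_or_eq_univ_or_eq_Iic_of_isClosed (isClosed_Iic.preimage hc) with
    h | h | ⟨a, h⟩
  · have ht : t ≤ 0 := by
      by_contra! ht
      obtain ⟨x, hx⟩ := ((tendsto_cdf_atBot ν).eventually (eventually_lt_nhds ht)).exists
      exact (h ▸ hx.le : x ∈ (∅ : Set ℝ))
    rw [h, measure_empty, eq_comm, ENNReal.ofReal_eq_zero]
    exact (min_le_left t 1).trans ht
  · have ht : 1 ≤ t := le_of_tendsto' (tendsto_cdf_atTop ν) fun x ↦ (h ▸ mem_univ x : x ∈ _)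
    rw [h, measure_univ, min_eq_right ht, ENNReal.ofReal_one]
  · have ha : cdf ν a = t := hc.apply_eq_of_preimage_Iic_eq_Iic h
    rw [h, ← ofReal_cdf, ha, min_eq_left (ha ▸ cdf_le_one ν a)]

theorem map_cdf_eq_volume_restrict_Icc (hc : Continuous (cdf ν)) :
    ν.map (cdf ν) = volume.restrict (Icc 0 1) := by
  have : IsProbabilityMeasure (ν.map (cdf ν)) := Measure.isProbabilityMeasure_map hc.aemeasurable
  refine Measure.ext_of_Iic _ _ fun t ↦ ?_
  rw [Measure.map_apply hc.measurable measurableSet_Iic, measure_cdf_preimage_Iic ν hc,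
    Real.volume_restrict_Icc_zero_one_Iic]

end ProbabilityTheory

/-- If the cdf `G` of a real random variable `X` is continuous, then the
copula transform `G ∘ X` is uniformly distributed on `[0,1]`. -/
theorem copula_transform_uniform
    {Ω : Type*} [MeasurableSpace Ω] (μ : Measure Ω) [IsProbabilityMeasure μ]
    (X : Ω → ℝ) (hX : Measurable X)
    (G : ℝ → ℝ) (hG : ∀ x, G x = (μ {ω | X ω ≤ x}).toReal)
    (hGcont : Continuous G) :
    Measure.map (fun ω => G (X ω)) μ = volume.restrict (Icc (0 : ℝ) 1) := by
  have : IsProbabilityMeasure (μ.map X) := Measure.isProbabilityMeasure_map hX.aemeasurable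
  have hG_cdf : G = cdf (μ.map X) := funext fun x ↦ by
    rw [hG, cdf_eq_real, measureReal_def, Measure.map_apply hX measurableSet_Iic]
    rfl
  subst hG_cdf
  rw [← map_cdf_eq_volume_restrict_Icc _ hGcont, Measure.map_map hGcont.measurable hX]
  rfl
end

section
/- Let X and Y be real-valued random variables on the same probability space which have the same continuous cumulative distribution function G (i.e. G_X = G_Y = G with G continuous). If G(X) = G(Y) almost surely, then X = Y almost surely. In particular, the representation map T : X ↦ (G_X(X), G_X) is injective on (almost-sure equivalence classes of) random variables with continuous cdfs. -/
open MeasureTheory Set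

lemma aux_flat_null {Ω : Type*} [MeasurableSpace Ω] (μ : Measure Ω) [IsProbabilityMeasure μ]
    (Z : Ω → ℝ) (hZ : Measurable Z) (G : ℝ → ℝ) (hGcont : Continuous G)
    (hGZ : ∀ x, (μ {ω | Z ω ≤ x}).toReal = G x) (q : ℝ) :
    μ {ω | q < Z ω ∧ G (Z ω) = G q} = 0 := by
  have hmono : Monotone G := by
    intro a b hab
    rw [← hGZ a, ← hGZ b]
    exact ENNReal.toReal_mono (measure_ne_top μ _)
      (measure_mono fun ω hw => le_trans hw hab)
  set T := {t : ℝ | G t = G q} with hT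
  by_cases hb : BddAbove T
  · have hTne : T.Nonempty := ⟨q, rfl⟩
    have hTclosed : IsClosed T := isClosed_eq hGcont continuous_const
    have hmem : sSup T ∈ T := hTclosed.csSup_mem hTne hb
    have hq : q ≤ sSup T := le_csSup hb (by exact rfl)
    have hsub : {ω | q < Z ω ∧ G (Z ω) = G q} ⊆
        {ω | Z ω ≤ sSup T} \ {ω | Z ω ≤ q} := by
      rintro ω ⟨h1, h2⟩
      exact ⟨le_csSup hb h2, not_le.mpr h1⟩
    refine measure_mono_null hsub ?_
    have heq : μ {ω | Z ω ≤ sSup T} = μ {ω | Z ω ≤ q} := by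
      refine (ENNReal.toReal_eq_toReal_iff' (measure_ne_top μ _) (measure_ne_top μ _)).mp ?_
      rw [hGZ, hGZ, hmem]
    have hm : NullMeasurableSet {ω | Z ω ≤ q} μ :=
      (show MeasurableSet {ω | Z ω ≤ q} from hZ measurableSet_Iic).nullMeasurableSet
    have hd := measure_diff (μ := μ) (s₁ := {ω | Z ω ≤ sSup T}) (s₂ := {ω | Z ω ≤ q})
      (fun ω hw => le_trans hw hq) hm (measure_ne_top μ _)
    rw [hd, heq, tsub_self]
  · have hGle : ∀ t, G t ≤ G q := by
      intro t
      obtain ⟨s, hs, hts⟩ := not_bddAbove_iff.mp hb t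
      exact (hmono hts.le).trans (le_of_eq hs)
    have hle : ∀ t, μ {ω | Z ω ≤ t} ≤ μ {ω | Z ω ≤ q} := by
      intro t
      refine (ENNReal.toReal_le_toReal (measure_ne_top μ _) (measure_ne_top μ _)).mp ?_
      rw [hGZ, hGZ]; exact hGle t
    have h1 : μ {ω | Z ω ≤ q} = 1 := by
      refine le_antisymm prob_le_one ?_
      have hU : (⋃ n : ℕ, {ω | Z ω ≤ (n : ℝ)}) = (univ : Set Ω) := by
        ext ω
        simp only [mem_iUnion, mem_setOf_eq, mem_univ, iff_true]
        exact exists_nat_ge (Z ω)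
      have hdir : Directed (· ⊆ ·) (fun n : ℕ => {ω | Z ω ≤ (n : ℝ)}) := by
        intro m n
        refine ⟨max m n, fun ω hw => ?_, fun ω hw => ?_⟩
        · exact le_trans (show Z ω ≤ (m : ℝ) from hw) (by exact_mod_cast le_max_left m n)
        · exact le_trans (show Z ω ≤ (n : ℝ) from hw) (by exact_mod_cast le_max_right m n)
      have := hdir.measure_iUnion (μ := μ)
      rw [hU, measure_univ] at this
      rw [this]
      exact iSup_le fun n => hle n
    have hcompl : μ ({ω | Z ω ≤ q}ᶜ) = 0 := by
      rw [measure_compl (show MeasurableSet {ω | Z ω ≤ q} from hZ measurableSet_Iic)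
        (measure_ne_top μ _), measure_univ, h1, tsub_self]
    refine measure_mono_null ?_ hcompl
    rintro ω ⟨h1', _⟩
    exact not_le.mpr h1'

/-- If `X` and `Y` have the same continuous cdf `G` and `G (X) = G (Y)`
almost surely, then `X = Y` almost surely (injectivity of the representation map
`T : X ↦ (G_X(X), G_X)` on a.s.-equivalence classes). -/
theorem representation_map_injective
    {Ω : Type*} [MeasurableSpace Ω] (μ : Measure Ω) [IsProbabilityMeasure μ]
    (X Y : Ω → ℝ) (hX : Measurable X) (hY : Measurable Y)
    (G : ℝ → ℝ) (hGcont : Continuous G)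
    (hGX : ∀ x, (μ {ω | X ω ≤ x}).toReal = G x)
    (hGY : ∀ x, (μ {ω | Y ω ≤ x}).toReal = G x)
    (h : ∀ᵐ ω ∂μ, G (X ω) = G (Y ω)) :
    ∀ᵐ ω ∂μ, X ω = Y ω := by
  have hmonoX : Monotone G := by
    intro a b hab
    rw [← hGX a, ← hGX b]
    exact ENNReal.toReal_mono (measure_ne_top μ _)
      (measure_mono fun ω hw => le_trans hw hab)
  have key : ∀ᵐ ω ∂μ, G (X ω) = G (Y ω) → X ω = Y ω := by
    rw [MeasureTheory.ae_iff]
    refine measure_mono_null (t :=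
      (⋃ r : ℚ, {ω | (r : ℝ) < Y ω ∧ G (Y ω) = G (r : ℝ)}) ∪
      (⋃ r : ℚ, {ω | (r : ℝ) < X ω ∧ G (X ω) = G (r : ℝ)})) ?_ ?_
    · intro ω hw
      simp only [mem_setOf_eq, Classical.not_imp] at hw
      obtain ⟨hGeq, hne⟩ := hw
      rcases lt_or_gt_of_ne hne with hlt | hlt
      · obtain ⟨r, hr1, hr2⟩ := exists_rat_btwn hlt
        left
        refine mem_iUnion.mpr ⟨r, hr2, ?_⟩
        have h1 : G (X ω) ≤ G (r : ℝ) := hmonoX hr1.le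
        have h2 : G (r : ℝ) ≤ G (Y ω) := hmonoX hr2.le
        exact le_antisymm (hGeq ▸ h1) h2
      · obtain ⟨r, hr1, hr2⟩ := exists_rat_btwn hlt
        right
        refine mem_iUnion.mpr ⟨r, hr2, ?_⟩
        have h1 : G (Y ω) ≤ G (r : ℝ) := hmonoX hr1.le
        have h2 : G (r : ℝ) ≤ G (X ω) := hmonoX hr2.le
        exact (le_antisymm h2 (hGeq ▸ h1)).symm
    · refine measure_union_null ?_ ?_ <;>
        refine measure_iUnion_null fun r => ?_
      · exact aux_flat_null μ Y hY G hGcont hGY (r : ℝ)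
      · exact aux_flat_null μ X hX G hGcont hGX (r : ℝ)
  exact h.mp key
end

section
/- Let U and V be random variables defined on the same probability space, each uniformly distributed on [0,1] (with arbitrary joint dependence). Then E[(U − V)²] ≤ 1/3; equivalently, the quantity d₁²(U,V) = 3·E[(U − V)²] satisfies 0 ≤ d₁²(U,V) ≤ 1. -/
open MeasureTheory Set

lemma aux_unif_integrable {Ω : Type*} [MeasurableSpace Ω] (μ : Measure Ω)
    (U : Ω → ℝ) (hU : Measurable U)
    (hUu : Measure.map U μ = volume.restrict (Icc (0 : ℝ) 1)) :
    Integrable (fun ω => (2 * U ω - 1) ^ 2 / 2) μ := by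
  have hg : Continuous fun x : ℝ => (2 * x - 1) ^ 2 / 2 := by continuity
  have : Integrable (fun x : ℝ => (2 * x - 1) ^ 2 / 2) (Measure.map U μ) := by
    rw [hUu]; exact hg.integrableOn_Icc
  exact (integrable_map_measure hg.aestronglyMeasurable hU.aemeasurable).mp this

lemma aux_unif_integral {Ω : Type*} [MeasurableSpace Ω] (μ : Measure Ω)
    (U : Ω → ℝ) (hU : Measurable U)
    (hUu : Measure.map U μ = volume.restrict (Icc (0 : ℝ) 1)) :
    ∫ ω, (2 * U ω - 1) ^ 2 / 2 ∂μ = 1 / 6 := by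
  have hg : Continuous fun x : ℝ => (2 * x - 1) ^ 2 / 2 := by continuity
  have h1 : ∫ ω, (2 * U ω - 1) ^ 2 / 2 ∂μ
      = ∫ x, (2 * x - 1) ^ 2 / 2 ∂(Measure.map U μ) :=
    (integral_map hU.aemeasurable hg.aestronglyMeasurable).symm
  rw [h1, hUu]
  have h2 : ∫ x in Icc (0:ℝ) 1, (2 * x - 1) ^ 2 / 2
      = ∫ x in (0:ℝ)..1, (2 * x - 1) ^ 2 / 2 := by
    rw [intervalIntegral.integral_of_le (by norm_num),
      MeasureTheory.integral_Icc_eq_integral_Ioc]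
  rw [h2]
  have : ∀ x : ℝ, (2 * x - 1) ^ 2 / 2 = 2 * x ^ 2 - 2 * x + 1 / 2 := by
    intro x; ring
  simp_rw [this]
  rw [intervalIntegral.integral_add, intervalIntegral.integral_sub]
  · have e1 : ∫ x in (0:ℝ)..1, 2 * x ^ 2 = 2 / 3 := by
      rw [intervalIntegral.integral_const_mul, integral_pow]; norm_num
    have e2 : ∫ x in (0:ℝ)..1, 2 * x = 1 := by
      rw [intervalIntegral.integral_const_mul, integral_id]; norm_num
    rw [e1, e2]; norm_num
  · exact (intervalIntegral.intervalIntegrable_pow 2).const_mul 2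
  · exact (intervalIntegral.intervalIntegrable_id).const_mul 2
  · exact ((intervalIntegral.intervalIntegrable_pow 2).const_mul 2).sub
      ((intervalIntegral.intervalIntegrable_id).const_mul 2)
  · exact intervalIntegrable_const

/-- For `U`, `V` both uniform on `[0,1]` (arbitrary joint dependence),
`E[(U - V)²] ≤ 1/3`, i.e. `0 ≤ d₁²(U,V) = 3·E[(U - V)²] ≤ 1`. -/
theorem d1_sq_bounded
    {Ω : Type*} [MeasurableSpace Ω] (μ : Measure Ω) [IsProbabilityMeasure μ]
    (U V : Ω → ℝ) (hU : Measurable U) (hV : Measurable V)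
    (hUu : Measure.map U μ = volume.restrict (Icc (0 : ℝ) 1))
    (hVu : Measure.map V μ = volume.restrict (Icc (0 : ℝ) 1)) :
    (∫ ω, (U ω - V ω) ^ 2 ∂μ) ≤ 1 / 3 ∧
      0 ≤ 3 * ∫ ω, (U ω - V ω) ^ 2 ∂μ ∧
      3 * ∫ ω, (U ω - V ω) ^ 2 ∂μ ≤ 1 := by
  have hintU := aux_unif_integrable μ U hU hUu
  have hintV := aux_unif_integrable μ V hV hVu
  have hints : Integrable (fun ω => (2 * U ω - 1) ^ 2 / 2 + (2 * V ω - 1) ^ 2 / 2) μ :=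
    hintU.add hintV
  have hpt : ∀ ω, (U ω - V ω) ^ 2 ≤ (2 * U ω - 1) ^ 2 / 2 + (2 * V ω - 1) ^ 2 / 2 := by
    intro ω; nlinarith [sq_nonneg (U ω + V ω - 1)]
  have hint : Integrable (fun ω => (U ω - V ω) ^ 2) μ := by
    refine hints.mono' ((hU.sub hV).pow_const 2).aestronglyMeasurable
      (ae_of_all _ fun ω => ?_)
    rw [Real.norm_eq_abs, abs_of_nonneg (sq_nonneg _)]
    exact hpt ω
  have hle : (∫ ω, (U ω - V ω) ^ 2 ∂μ) ≤ 1 / 3 := by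
    calc (∫ ω, (U ω - V ω) ^ 2 ∂μ)
        ≤ ∫ ω, ((2 * U ω - 1) ^ 2 / 2 + (2 * V ω - 1) ^ 2 / 2) ∂μ :=
          integral_mono hint hints hpt
      _ = (∫ ω, (2 * U ω - 1) ^ 2 / 2 ∂μ) + ∫ ω, (2 * V ω - 1) ^ 2 / 2 ∂μ :=
          integral_add hintU hintV
      _ = 1 / 3 := by
          rw [aux_unif_integral μ U hU hUu, aux_unif_integral μ V hV hVu]; norm_num
  have hnn : 0 ≤ ∫ ω, (U ω - V ω) ^ 2 ∂μ :=
    integral_nonneg fun ω => sq_nonneg _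
  exact ⟨hle, by linarith, by linarith⟩
end

section
/- Let θ ∈ [0,1] and let X, Y be real-valued random variables on a common probability space whose cdfs G_X, G_Y are continuous and which admit probability density functions f, g with respect to Lebesgue measure. Define d_θ²(X,Y) = θ·3·E[(G_X(X) − G_Y(Y))²] + (1−θ)·(1/2)·∫(√f − √g)² dλ. Then 0 ≤ d_θ²(X,Y) ≤ 1 (Property: 0 ≤ d_θ ≤ 1). -/
/-!
When the cdfs are continuous, the probability integral transform makes `G_X(X)` and `G_Y(Y)`
uniform on `[0, 1]`. For `a = G_X(X) - 1/2` and `b = G_Y(Y) - 1/2` the parallelogram law gives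
`E (a - b)² ≤ 2 E a² + 2 E b² = 1/3`, so `d₁² ≤ 1`. Pointwise `(√f - √g)² ≤ f⁺ + g⁺` bounds the
Hellinger integral by `2`, so `d₀² ≤ 1`, and `d_θ²` is a convex combination of the two.
-/

open MeasureTheory Set

/-- The cdf of a real random variable `X` on `(Ω, μ)`. -/
noncomputable def cdfOf {Ω : Type*} [MeasurableSpace Ω] (μ : Measure Ω) (X : Ω → ℝ) :
    ℝ → ℝ :=
  fun x => (μ {ω | X ω ≤ x}).toReal

/-- The squared dependence distance `d₁²(X,Y) = 3·E[(G_X(X) − G_Y(Y))²]`. -/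
noncomputable def d1sq {Ω : Type*} [MeasurableSpace Ω] (μ : Measure Ω) (X Y : Ω → ℝ) : ℝ :=
  3 * ∫ ω, (cdfOf μ X (X ω) - cdfOf μ Y (Y ω)) ^ 2 ∂μ

/-- The squared Hellinger distance `d₀²(f,g) = (1/2)·∫(√f − √g)² dλ` between densities. -/
noncomputable def d0sq (f g : ℝ → ℝ) : ℝ :=
  (1 / 2) * ∫ x, (Real.sqrt (f x) - Real.sqrt (g x)) ^ 2

open ProbabilityTheory

theorem Continuous.exists_preimage_Iic_eq_Iic {F : ℝ → ℝ} (hF : Continuous F) (hmono : Monotone F)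
    {s : ℝ} (hlow : ∃ x, F x ≤ s) (hhigh : ∃ x, s < F x) :
    ∃ a, F ⁻¹' Iic s = Iic a ∧ F a = s := by
  set A := F ⁻¹' Iic s
  obtain ⟨y, hy⟩ := hhigh
  have hbdd : BddAbove A :=
    ⟨y, fun x hx => le_of_not_gt fun hyx => (hx.trans_lt hy).not_ge (hmono hyx.le)⟩
  have ha : sSup A ∈ A := (isClosed_Iic.preimage hF).csSup_mem hlow hbdd
  have hA : A = Iic (sSup A) :=
    Subset.antisymm (fun x hx => le_csSup hbdd hx) (fun x hx => (hmono hx).trans ha)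
  refine ⟨sSup A, hA, le_antisymm ha ?_⟩
  refine ge_of_tendsto (hF.continuousWithinAt (s := Ioi (sSup A)) (x := sSup A)) ?_
  filter_upwards [self_mem_nhdsWithin] with x hx
  have hxA : x ∉ A := fun h => (mem_Ioi.mp hx).not_ge (le_csSup hbdd h)
  exact (not_le.mp hxA).le

theorem ProbabilityTheory.map_cdf_eq_restrict_Icc (ν : Measure ℝ) [IsProbabilityMeasure ν]
    (hF : Continuous (cdf ν)) : ν.map (cdf ν) = volume.restrict (Icc 0 1) := by
  have : IsProbabilityMeasure (ν.map (cdf ν)) := Measure.isProbabilityMeasure_map hF.aemeasurable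
  have : IsFiniteMeasure (volume.restrict (Icc (0 : ℝ) 1)) := ⟨by simp⟩
  refine Measure.ext_of_Iic _ _ fun s => ?_
  have hIcc : Iic s ∩ Icc 0 1 = Icc 0 (min s 1) := by
    ext x; simp only [mem_inter_iff, mem_Iic, mem_Icc, le_min_iff]; tauto
  rw [Measure.map_apply hF.measurable measurableSet_Iic, Measure.restrict_apply measurableSet_Iic,
    hIcc, Real.volume_Icc, sub_zero]
  by_cases hs1 : 1 ≤ s
  · have : cdf ν ⁻¹' Iic s = univ := eq_univ_of_forall fun x => (cdf_le_one ν x).trans hs1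
    simp [this, hs1]
  by_cases hlow : ∃ x, cdf ν x ≤ s
  · have hhigh : ∃ x, s < cdf ν x :=
      ((tendsto_cdf_atTop ν).eventually_const_lt (not_le.mp hs1)).exists
    obtain ⟨a, ha, hFa⟩ := hF.exists_preimage_Iic_eq_Iic (monotone_cdf ν) hlow hhigh
    rw [ha, ← ofReal_cdf, hFa, min_eq_left (not_le.mp hs1).le]
  · push Not at hlow
    have hs0 : s ≤ 0 := le_of_not_gt fun hs0 =>
      let ⟨x, hx⟩ := ((tendsto_cdf_atBot ν).eventually_lt_const hs0).exists
      (hlow x).not_ge hx.le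
    have : cdf ν ⁻¹' Iic s = ∅ := eq_empty_of_forall_notMem fun x hx => (hlow x).not_ge hx
    rw [this, measure_empty, min_eq_left (not_le.mp hs1).le, ENNReal.ofReal_of_nonpos hs0]

section ProbabilityIntegralTransform

variable {Ω : Type*} [MeasurableSpace Ω] {μ : Measure Ω} [IsProbabilityMeasure μ] {X : Ω → ℝ}

theorem cdfOf_eq_cdf_map (hX : AEMeasurable X μ) : cdfOf μ X = cdf (μ.map X) := by
  have := Measure.isProbabilityMeasure_map hX
  funext x
  rw [cdf_eq_real, measureReal_def, Measure.map_apply_of_aemeasurable hX measurableSet_Iic]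
  rfl

theorem map_cdfOf_comp_eq_restrict_Icc (hX : AEMeasurable X μ) (hF : Continuous (cdfOf μ X)) :
    μ.map (fun ω => cdfOf μ X (X ω)) = volume.restrict (Icc 0 1) := by
  rw [cdfOf_eq_cdf_map hX] at hF ⊢
  have := Measure.isProbabilityMeasure_map hX
  rw [← map_cdf_eq_restrict_Icc _ hF, AEMeasurable.map_map_of_aemeasurable hF.aemeasurable hX]
  rfl

end ProbabilityIntegralTransform

section UniformMoments

variable {Ω : Type*} [MeasurableSpace Ω] {μ : Measure Ω} {U V : Ω → ℝ}

theorem integrable_comp_of_map_eq_restrict_Icc (hU : AEMeasurable U μ)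
    (hmap : μ.map U = volume.restrict (Icc 0 1)) {h : ℝ → ℝ} (hh : Continuous h) :
    Integrable (fun ω => h (U ω)) μ :=
  (integrable_map_measure hh.aestronglyMeasurable hU).mp (hmap ▸ hh.integrableOn_Icc)

theorem integral_sq_sub_half_of_map_eq_restrict_Icc (hU : AEMeasurable U μ)
    (hmap : μ.map U = volume.restrict (Icc 0 1)) :
    ∫ ω, (U ω - 1 / 2) ^ 2 ∂μ = 1 / 12 := by
  rw [← integral_map (f := fun x : ℝ => (x - 1 / 2) ^ 2) hU (by fun_prop), hmap,
    integral_Icc_eq_integral_Ioc, ← intervalIntegral.integral_of_le zero_le_one,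
    intervalIntegral.integral_comp_sub_right (fun x => x ^ 2), integral_pow]
  norm_num

theorem integral_sq_sub_le_of_map_eq_restrict_Icc (hU : AEMeasurable U μ) (hV : AEMeasurable V μ)
    (hUmap : μ.map U = volume.restrict (Icc 0 1)) (hVmap : μ.map V = volume.restrict (Icc 0 1)) :
    ∫ ω, (U ω - V ω) ^ 2 ∂μ ≤ 1 / 3 := by
  have hU' := integrable_comp_of_map_eq_restrict_Icc hU hUmap (h := fun x => 2 * (x - 1 / 2) ^ 2)
    (by fun_prop)
  have hV' := integrable_comp_of_map_eq_restrict_Icc hV hVmap (h := fun x => 2 * (x - 1 / 2) ^ 2)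
    (by fun_prop)
  calc ∫ ω, (U ω - V ω) ^ 2 ∂μ
      ≤ ∫ ω, (2 * (U ω - 1 / 2) ^ 2 + 2 * (V ω - 1 / 2) ^ 2) ∂μ := by
        refine integral_mono_of_nonneg (ae_of_all _ fun _ => sq_nonneg _) (hU'.add hV')
          (ae_of_all _ fun ω => ?_)
        -- parallelogram law for `U - 1/2` and `V - 1/2`
        nlinarith [sq_nonneg (U ω + V ω - 1)]
    _ = 2 * (1 / 12) + 2 * (1 / 12) := by
        rw [integral_add hU' hV', integral_const_mul, integral_const_mul,
          integral_sq_sub_half_of_map_eq_restrict_Icc hU hUmap,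
          integral_sq_sub_half_of_map_eq_restrict_Icc hV hVmap]
    _ = 1 / 3 := by norm_num

end UniformMoments

section Hellinger

variable {α : Type*} [MeasurableSpace α] {ν : Measure α}

theorem integrable_max_zero_and_integral_eq_one {f : α → ℝ} (hf : AEMeasurable f ν)
    [IsProbabilityMeasure (ν.withDensity fun x => ENNReal.ofReal (f x))] :
    Integrable (fun x => max (f x) 0) ν ∧ ∫ x, max (f x) 0 ∂ν = 1 := by
  have hlint : ∫⁻ x, ENNReal.ofReal (f x) ∂ν = 1 := by
    have h := measure_univ (μ := ν.withDensity fun x => ENNReal.ofReal (f x))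
    rwa [withDensity_apply _ MeasurableSet.univ, Measure.restrict_univ] at h
  refine ⟨integrable_toReal_of_lintegral_ne_top hf.ennreal_ofReal (by simp [hlint]), ?_⟩
  have h := integral_toReal hf.ennreal_ofReal (ae_of_all _ fun x => ENNReal.ofReal_lt_top)
  rw [hlint, ENNReal.toReal_one] at h
  exact h

theorem integral_sq_sqrt_sub_sqrt_le {f g : α → ℝ} (hf : Integrable (fun x => max (f x) 0) ν)
    (hg : Integrable (fun x => max (g x) 0) ν) :
    ∫ x, (√(f x) - √(g x)) ^ 2 ∂ν ≤ ∫ x, max (f x) 0 ∂ν + ∫ x, max (g x) 0 ∂ν := by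
  rw [← integral_add hf hg]
  refine integral_mono_of_nonneg (ae_of_all _ fun _ => sq_nonneg _)
    (hf.add hg) (ae_of_all _ fun x => ?_)
  dsimp only
  rw [← Real.sq_sqrt', ← Real.sq_sqrt']
  nlinarith [mul_nonneg (Real.sqrt_nonneg (f x)) (Real.sqrt_nonneg (g x))]

end Hellinger

theorem d1sq_mem_Icc {Ω : Type*} [MeasurableSpace Ω] {μ : Measure Ω} [IsProbabilityMeasure μ]
    {X Y : Ω → ℝ} (hX : AEMeasurable X μ) (hY : AEMeasurable Y μ)
    (hGX : Continuous (cdfOf μ X)) (hGY : Continuous (cdfOf μ Y)) :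
    d1sq μ X Y ∈ Icc 0 1 := by
  have hle : ∫ ω, (cdfOf μ X (X ω) - cdfOf μ Y (Y ω)) ^ 2 ∂μ ≤ 1 / 3 :=
    integral_sq_sub_le_of_map_eq_restrict_Icc (hGX.measurable.comp_aemeasurable hX)
      (hGY.measurable.comp_aemeasurable hY) (map_cdfOf_comp_eq_restrict_Icc hX hGX)
      (map_cdfOf_comp_eq_restrict_Icc hY hGY)
  have hnonneg : 0 ≤ ∫ ω, (cdfOf μ X (X ω) - cdfOf μ Y (Y ω)) ^ 2 ∂μ :=
    integral_nonneg fun _ => sq_nonneg _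
  constructor <;> unfold d1sq <;> linarith

theorem d0sq_mem_Icc {f g : ℝ → ℝ} (hf : AEMeasurable f) (hg : AEMeasurable g)
    [IsProbabilityMeasure (volume.withDensity fun x => ENNReal.ofReal (f x))]
    [IsProbabilityMeasure (volume.withDensity fun x => ENNReal.ofReal (g x))] :
    d0sq f g ∈ Icc 0 1 := by
  obtain ⟨hf_int, hf_one⟩ := integrable_max_zero_and_integral_eq_one hf
  obtain ⟨hg_int, hg_one⟩ := integrable_max_zero_and_integral_eq_one hg
  have hle := integral_sq_sqrt_sub_sqrt_le hf_int hg_int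
  have hnonneg : 0 ≤ ∫ x, (√(f x) - √(g x)) ^ 2 := integral_nonneg fun _ => sq_nonneg _
  constructor <;> unfold d0sq <;> linarith

theorem dtheta_sq_bounded_general
    {Ω : Type*} [MeasurableSpace Ω] (μ : Measure Ω) [IsProbabilityMeasure μ]
    (θ : ℝ) (hθ0 : 0 ≤ θ) (hθ1 : θ ≤ 1)
    (X Y : Ω → ℝ) (hX : Measurable X) (hY : Measurable Y)
    (f g : ℝ → ℝ) (hf : Measurable f) (hg : Measurable g)
    (hXd : Measure.map X μ = volume.withDensity (fun x => ENNReal.ofReal (f x)))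
    (hYd : Measure.map Y μ = volume.withDensity (fun x => ENNReal.ofReal (g x)))
    (hGXc : Continuous (cdfOf μ X)) (hGYc : Continuous (cdfOf μ Y)) :
    0 ≤ θ * d1sq μ X Y + (1 - θ) * d0sq f g ∧
      θ * d1sq μ X Y + (1 - θ) * d0sq f g ≤ 1 := by
  have hd1 := d1sq_mem_Icc hX.aemeasurable hY.aemeasurable hGXc hGYc
  have : IsProbabilityMeasure (volume.withDensity fun x => ENNReal.ofReal (f x)) :=
    hXd ▸ Measure.isProbabilityMeasure_map hX.aemeasurable
  have : IsProbabilityMeasure (volume.withDensity fun x => ENNReal.ofReal (g x)) :=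
    hYd ▸ Measure.isProbabilityMeasure_map hY.aemeasurable
  have hd0 := d0sq_mem_Icc hf.aemeasurable hg.aemeasurable
  exact convex_Icc (0 : ℝ) 1 hd1 hd0 hθ0 (sub_nonneg.mpr hθ1) (add_sub_cancel θ 1)

/-- for `θ ∈ [0,1]` and random variables `X`, `Y` with continuous cdfs
admitting densities `f`, `g`, the quantity
`d_θ²(X,Y) = θ·d₁²(X,Y) + (1−θ)·d₀²(f,g)` satisfies `0 ≤ d_θ² ≤ 1`. -/
theorem dtheta_sq_bounded
    {Ω : Type*} [MeasurableSpace Ω] (μ : Measure Ω) [IsProbabilityMeasure μ]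
    (θ : ℝ) (hθ0 : 0 ≤ θ) (hθ1 : θ ≤ 1)
    (X Y : Ω → ℝ) (hX : Measurable X) (hY : Measurable Y)
    (f g : ℝ → ℝ) (hf : Measurable f) (hg : Measurable g)
    (hf0 : ∀ x, 0 ≤ f x) (hg0 : ∀ x, 0 ≤ g x)
    (hXd : Measure.map X μ = volume.withDensity (fun x => ENNReal.ofReal (f x)))
    (hYd : Measure.map Y μ = volume.withDensity (fun x => ENNReal.ofReal (g x)))
    (hGXc : Continuous (cdfOf μ X)) (hGYc : Continuous (cdfOf μ Y)) :
    0 ≤ θ * d1sq μ X Y + (1 - θ) * d0sq f g ∧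
      θ * d1sq μ X Y + (1 - θ) * d0sq f g ≤ 1 :=
  dtheta_sq_bounded_general μ θ hθ0 hθ1 X Y hX hY f g hf hg hXd hYd hGXc hGYc
end

section
/- Let θ ∈ [0,1] and let X, Y, Z be real-valued random variables on a common probability space, each with continuous cdf and admitting a probability density function with respect to Lebesgue measure. Then the distance d_θ satisfies the triangle inequality: d_θ(X,Z) ≤ d_θ(X,Y) + d_θ(Y,Z), where d_θ(·,·) denotes the nonnegative square root of d_θ²(·,·). -/
open MeasureTheory Set
open scoped ENNReal

/-- The distance `d_θ(X,Y)`, the square root of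
`θ·d₁²(X,Y) + (1−θ)·d₀²(f,g)`, where `f`, `g` are densities of `X`, `Y`. -/
noncomputable def dtheta {Ω : Type*} [MeasurableSpace Ω] (μ : Measure Ω)
    (θ : ℝ) (X Y : Ω → ℝ) (f g : ℝ → ℝ) : ℝ :=
  Real.sqrt (θ * d1sq μ X Y + (1 - θ) * d0sq f g)

/-!
Both `d₁` and `d₀` are (multiples of) L² distances: between the random variables `G_X(X)`
and `G_Y(Y)` in `L²(μ)`, and between `√f` and `√g` in `L²(λ)`. Each therefore satisfies the
triangle inequality, and `d_θ` is the weighted Euclidean norm of the pair `(d₁, d₀)`, so the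
triangle inequality for `d_θ` follows from Minkowski's inequality in `ℝ²`.
-/

theorem Real.sqrt_weighted_sq_add_le {c d : ℝ} (hc : 0 ≤ c) (hd : 0 ≤ d) (a₁ a₂ b₁ b₂ : ℝ) :
    √(c * (a₁ + a₂) ^ 2 + d * (b₁ + b₂) ^ 2)
      ≤ √(c * a₁ ^ 2 + d * b₁ ^ 2) + √(c * a₂ ^ 2 + d * b₂ ^ 2) := by
  set P := c * a₁ ^ 2 + d * b₁ ^ 2
  set Q := c * a₂ ^ 2 + d * b₂ ^ 2
  have hP : 0 ≤ P := by positivity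
  have hQ : 0 ≤ Q := by positivity
  have cauchy_schwarz : c * a₁ * a₂ + d * b₁ * b₂ ≤ √P * √Q := by
    rw [← Real.sqrt_mul hP]
    refine (le_abs_self _).trans (Real.abs_le_sqrt ?_)
    nlinarith [mul_nonneg (mul_nonneg hc hd) (sq_nonneg (a₁ * b₂ - a₂ * b₁))]
  rw [Real.sqrt_le_left (by positivity)]
  nlinarith [Real.sq_sqrt hP, Real.sq_sqrt hQ]

theorem Real.sqrt_weighted_add_le {c d I J I₁ J₁ I₂ J₂ : ℝ} (hc : 0 ≤ c) (hd : 0 ≤ d)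
    (hI₁ : 0 ≤ I₁) (hJ₁ : 0 ≤ J₁) (hI₂ : 0 ≤ I₂) (hJ₂ : 0 ≤ J₂)
    (hI : √I ≤ √I₁ + √I₂) (hJ : √J ≤ √J₁ + √J₂) :
    √(c * I + d * J) ≤ √(c * I₁ + d * J₁) + √(c * I₂ + d * J₂) := by
  have hI' : I ≤ (√I₁ + √I₂) ^ 2 := (Real.sqrt_le_left (by positivity)).1 hI
  have hJ' : J ≤ (√J₁ + √J₂) ^ 2 := (Real.sqrt_le_left (by positivity)).1 hJ
  calc √(c * I + d * J) ≤ √(c * (√I₁ + √I₂) ^ 2 + d * (√J₁ + √J₂) ^ 2) := by gcongr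
    _ ≤ √(c * √I₁ ^ 2 + d * √J₁ ^ 2) + √(c * √I₂ ^ 2 + d * √J₂ ^ 2) :=
      Real.sqrt_weighted_sq_add_le hc hd _ _ _ _
    _ = √(c * I₁ + d * J₁) + √(c * I₂ + d * J₂) := by
      rw [Real.sq_sqrt hI₁, Real.sq_sqrt hJ₁, Real.sq_sqrt hI₂, Real.sq_sqrt hJ₂]

section L2

variable {α : Type*} [MeasurableSpace α] {μ : Measure α}

theorem MeasureTheory.MemLp.toReal_eLpNorm_two {h : α → ℝ} (hh : MemLp h 2 μ) :
    (eLpNorm h 2 μ).toReal = √(∫ a, h a ^ 2 ∂μ) := by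
  rw [hh.eLpNorm_eq_integral_rpow_norm two_ne_zero ENNReal.ofNat_ne_top,
    ENNReal.toReal_ofReal (by positivity), Real.sqrt_eq_rpow]
  simp

theorem sqrt_integral_sq_sub_le {a b c : α → ℝ}
    (ha : MemLp a 2 μ) (hb : MemLp b 2 μ) (hc : MemLp c 2 μ) :
    √(∫ x, (a x - c x) ^ 2 ∂μ) ≤ √(∫ x, (a x - b x) ^ 2 ∂μ) + √(∫ x, (b x - c x) ^ 2 ∂μ) := by
  have hab := ha.sub hb
  have hbc := hb.sub hc
  have h := ENNReal.toReal_le_add (eLpNorm_add_le hab.1 hbc.1 one_le_two)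
    hab.eLpNorm_ne_top hbc.eLpNorm_ne_top
  rwa [sub_add_sub_cancel, (ha.sub hc).toReal_eLpNorm_two, hab.toReal_eLpNorm_two,
    hbc.toReal_eLpNorm_two] at h

end L2

section Distributions

variable {Ω : Type*} [MeasurableSpace Ω] {μ : Measure Ω} [IsFiniteMeasure μ]

theorem monotone_cdfOf (X : Ω → ℝ) : Monotone (cdfOf μ X) :=
  fun _ _ hxy => measureReal_mono fun _ hω => le_trans hω hxy

theorem memLp_cdfOf_comp {X : Ω → ℝ} (hX : AEMeasurable X μ) (p : ℝ≥0∞) :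
    MemLp (fun ω => cdfOf μ X (X ω)) p μ :=
  MemLp.of_bound ((monotone_cdfOf X).measurable.comp_aemeasurable hX).aestronglyMeasurable
    (μ.real univ) (ae_of_all _ fun _ =>
      (Real.norm_of_nonneg ENNReal.toReal_nonneg).trans_le (measureReal_mono (subset_univ _)))

theorem memLp_sqrt_of_map_eq_withDensity {α : Type*} [MeasurableSpace α] {ν : Measure α}
    {X : Ω → α} {f : α → ℝ} (hf : Measurable f) (hf0 : ∀ x, 0 ≤ f x)
    (hXf : μ.map X = ν.withDensity fun x => ENNReal.ofReal (f x)) :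
    MemLp (fun x => √(f x)) 2 ν := by
  rw [memLp_two_iff_integrable_sq hf.sqrt.aestronglyMeasurable]
  simp_rw [Real.sq_sqrt (hf0 _)]
  refine ⟨hf.aestronglyMeasurable, (hasFiniteIntegral_iff_ofReal (ae_of_all _ hf0)).2 ?_⟩
  rw [← setLIntegral_univ, ← withDensity_apply _ MeasurableSet.univ, ← hXf]
  exact measure_lt_top _ _

end Distributions

theorem dtheta_eq {Ω : Type*} [MeasurableSpace Ω] (μ : Measure Ω) (θ : ℝ) (X Y : Ω → ℝ)
    (f g : ℝ → ℝ) :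
    dtheta μ θ X Y f g = √(3 * θ * ∫ ω, (cdfOf μ X (X ω) - cdfOf μ Y (Y ω)) ^ 2 ∂μ
      + (1 - θ) / 2 * ∫ x, (√(f x) - √(g x)) ^ 2) := by
  rw [dtheta, d1sq, d0sq]
  ring_nf

theorem dtheta_triangle_general
    {Ω : Type*} [MeasurableSpace Ω] (μ : Measure Ω) [IsProbabilityMeasure μ]
    (θ : ℝ) (hθ0 : 0 ≤ θ) (hθ1 : θ ≤ 1)
    (X Y Z : Ω → ℝ) (hX : Measurable X) (hY : Measurable Y) (hZ : Measurable Z)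
    (f g k : ℝ → ℝ) (hf : Measurable f) (hg : Measurable g) (hk : Measurable k)
    (hf0 : ∀ x, 0 ≤ f x) (hg0 : ∀ x, 0 ≤ g x) (hk0 : ∀ x, 0 ≤ k x)
    (hXd : Measure.map X μ = volume.withDensity (fun x => ENNReal.ofReal (f x)))
    (hYd : Measure.map Y μ = volume.withDensity (fun x => ENNReal.ofReal (g x)))
    (hZd : Measure.map Z μ = volume.withDensity (fun x => ENNReal.ofReal (k x))) :
    dtheta μ θ X Z f k ≤ dtheta μ θ X Y f g + dtheta μ θ Y Z g k := by
  simp only [dtheta_eq]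
  exact Real.sqrt_weighted_add_le (by positivity) (by linarith)
    (integral_nonneg fun _ => sq_nonneg _) (integral_nonneg fun _ => sq_nonneg _)
    (integral_nonneg fun _ => sq_nonneg _) (integral_nonneg fun _ => sq_nonneg _)
    (sqrt_integral_sq_sub_le (memLp_cdfOf_comp hX.aemeasurable 2)
      (memLp_cdfOf_comp hY.aemeasurable 2) (memLp_cdfOf_comp hZ.aemeasurable 2))
    (sqrt_integral_sq_sub_le (memLp_sqrt_of_map_eq_withDensity hf hf0 hXd)
      (memLp_sqrt_of_map_eq_withDensity hg hg0 hYd) (memLp_sqrt_of_map_eq_withDensity hk hk0 hZd))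

/-- `d_θ` satisfies the triangle inequality
`d_θ(X,Z) ≤ d_θ(X,Y) + d_θ(Y,Z)` for random variables with continuous cdfs and
densities `f`, `g`, `k`. -/
theorem dtheta_triangle
    {Ω : Type*} [MeasurableSpace Ω] (μ : Measure Ω) [IsProbabilityMeasure μ]
    (θ : ℝ) (hθ0 : 0 ≤ θ) (hθ1 : θ ≤ 1)
    (X Y Z : Ω → ℝ) (hX : Measurable X) (hY : Measurable Y) (hZ : Measurable Z)
    (f g k : ℝ → ℝ) (hf : Measurable f) (hg : Measurable g) (hk : Measurable k)
    (hf0 : ∀ x, 0 ≤ f x) (hg0 : ∀ x, 0 ≤ g x) (hk0 : ∀ x, 0 ≤ k x)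
    (hXd : Measure.map X μ = volume.withDensity (fun x => ENNReal.ofReal (f x)))
    (hYd : Measure.map Y μ = volume.withDensity (fun x => ENNReal.ofReal (g x)))
    (hZd : Measure.map Z μ = volume.withDensity (fun x => ENNReal.ofReal (k x)))
    (hGXc : Continuous (cdfOf μ X)) (hGYc : Continuous (cdfOf μ Y))
    (hGZc : Continuous (cdfOf μ Z)) :
    dtheta μ θ X Z f k ≤ dtheta μ θ X Y f g + dtheta μ θ Y Z g k :=
  dtheta_triangle_general μ θ hθ0 hθ1 X Y Z hX hY hZ f g k hf hg hk hf0 hg0 hk0 hXd hYd hZd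
end
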